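/- Let ⟨X,Y⟩ be a safe pair of axioms. A full nested sequent is provable in NCK' + X^{↓}_s + Y•_s if and only if it is provable in NCK' + X^{↓} + Y•. -/

import Mathlib

/-! # Constructive modal logic: formulas and Hilbert systems -/

inductive Formula : Type
  | var : Nat → Formula
  | bot : Formula
  | and : Formula → Formula → Formula
  | or  : Formula → Formula → Formula
  | imp : Formula → Formula → Formula
  | box : Formula → Formula
  | dia : Formula → Formula
  deriving DecidableEq

/-- ⊤ abbreviates ⊥⊃⊥ -/
def Formula.top : Formula := Formula.imp Formula.bot Formula.bot

/-- The five modal axioms d, t, b, 4, 5. -/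
inductive Ax : Type
  | d | t | b | four | five
  deriving DecidableEq

/-- The formula scheme corresponding to each modal axiom. -/
def axForm : Ax → Formula → Formula
  | .d, A => Formula.imp (.box A) (.dia A)
  | .t, A => Formula.and (.imp A (.dia A)) (.imp (.box A) A)
  | .b, A => Formula.and (.imp A (.box (.dia A))) (.imp (.dia (.box A)) A)
  | .four, A => Formula.and (.imp (.dia (.dia A)) (.dia A)) (.imp (.box A) (.box (.box A)))
  | .five, A => Formula.and (.imp (.dia A) (.box (.dia A))) (.imp (.dia (.box A)) (.box A))

/-- The Hilbert system HCK+X: a complete axiomatization of intuitionistic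
propositional logic, plus k1 and k2, plus the modal axiom schemes in X,
closed under modus ponens and necessitation. -/
inductive Hck (X : Set Ax) : Formula → Prop
  | imp1 (A B : Formula) : Hck X (.imp A (.imp B A))
  | imp2 (A B C : Formula) :
      Hck X (.imp (.imp A (.imp B C)) (.imp (.imp A B) (.imp A C)))
  | andI (A B : Formula) : Hck X (.imp A (.imp B (.and A B)))
  | andE1 (A B : Formula) : Hck X (.imp (.and A B) A)
  | andE2 (A B : Formula) : Hck X (.imp (.and A B) B)
  | orI1 (A B : Formula) : Hck X (.imp A (.or A B))
  | orI2 (A B : Formula) : Hck X (.imp B (.or A B))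
  | orE (A B C : Formula) :
      Hck X (.imp (.imp A C) (.imp (.imp B C) (.imp (.or A B) C)))
  | exfalso (A : Formula) : Hck X (.imp .bot A)
  | k1 (A B : Formula) : Hck X (.imp (.box (.imp A B)) (.imp (.box A) (.box B)))
  | k2 (A B : Formula) : Hck X (.imp (.box (.imp A B)) (.imp (.dia A) (.dia B)))
  | ax {x : Ax} (A : Formula) : x ∈ X → Hck X (axForm x A)
  | mp {A B : Formula} : Hck X (.imp A B) → Hck X A → Hck X B
  | nec {A : Formula} : Hck X A → Hck X (.box A)

/-! # Nested sequents -/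

/-- LHS sequents: Φ ::= ∅ | A• | [Φ] | Φ,Φ -/
inductive LHS : Type
  | emp : LHS
  | fml : Formula → LHS
  | br : LHS → LHS
  | comma : LHS → LHS → LHS

/-- RHS sequents: Ψ ::= A∘ | [Φ,Ψ] -/
inductive RHS : Type
  | fml : Formula → RHS
  | br : LHS → RHS → RHS

/-- A full sequent: Φ,Ψ with exactly one output formula. -/
structure FullSeq where
  L : LHS
  R : RHS

/-- Corresponding formula of an LHS sequent. -/
def LHS.fm : LHS → Formula
  | .emp => Formula.top
  | .fml A => A
  | .br Φ => Formula.dia Φ.fm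
  | .comma Φ₁ Φ₂ => Formula.and Φ₁.fm Φ₂.fm

/-- Corresponding formula of an RHS sequent. -/
def RHS.fm : RHS → Formula
  | .fml A => A
  | .br Φ Ψ => Formula.box (Formula.imp Φ.fm Ψ.fm)

/-- Corresponding formula of a full sequent: fm(Φ,Ψ) = fm(Φ) ⊃ fm(Ψ). -/
def FullSeq.fm (S : FullSeq) : Formula := Formula.imp S.L.fm S.R.fm

/-! # Contexts -/

/-- An output context: Γ₁•,[Γ₂•,[…,[Γₙ•,{ }]…]]. -/
inductive OutCtx : Type
  | hole : LHS → OutCtx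
  | cons : LHS → OutCtx → OutCtx

/-- Filling an output context with an LHS sequent yields an LHS sequent. -/
def OutCtx.fillL : OutCtx → LHS → LHS
  | .hole Φ, Δ => Φ.comma Δ
  | .cons Φ C, Δ => Φ.comma (LHS.br (C.fillL Δ))

/-- Filling an output context with nothing (∅) yields an LHS sequent. -/
def OutCtx.fillE : OutCtx → LHS
  | .hole Φ => Φ
  | .cons Φ C => Φ.comma (LHS.br C.fillE)

/-- Filling an output context with an RHS sequent yields a full sequent. -/
def OutCtx.fillR : OutCtx → RHS → FullSeq
  | .hole Φ, Ψ => ⟨Φ, Ψ⟩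
  | .cons Φ C, Ψ => ⟨Φ, RHS.br (C.fillR Ψ).L (C.fillR Ψ).R⟩

/-- Filling an output context with a full sequent yields a full sequent. -/
def OutCtx.fillF : OutCtx → FullSeq → FullSeq
  | .hole Φ, S => ⟨Φ.comma S.L, S.R⟩
  | .cons Φ C, S => ⟨Φ, RHS.br (C.fillF S).L (C.fillF S).R⟩

/-- Depth of an output context: number of brackets around the hole. -/
def OutCtx.depth : OutCtx → Nat
  | .hole _ => 0
  | .cons _ C => C.depth + 1

def OutCtx.addL : LHS → OutCtx → OutCtx
  | Φ, .hole Φ' => .hole (Φ.comma Φ')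
  | Φ, .cons Φ' C => .cons (Φ.comma Φ') C

/-- Composition of output contexts (plugging one into the hole of the other). -/
def OutCtx.comp : OutCtx → OutCtx → OutCtx
  | .hole Φ, C => OutCtx.addL Φ C
  | .cons Φ C, C' => .cons Φ (C.comp C')

/-- An input context Γ'{Λ{ },Π∘} with Γ'{ }, Λ{ } output contexts, Π∘ an RHS
sequent.  Filled with an LHS sequent it yields a full sequent. -/
structure InCtx where
  outer : OutCtx
  inner : OutCtx
  out : RHS

/-- Filling an input context with an LHS sequent. -/
def InCtx.fill (G : InCtx) (Δ : LHS) : FullSeq :=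
  G.outer.fillF ⟨G.inner.fillL Δ, G.out⟩

/-- Output pruning Γ↓{ } = Γ'{Λ{ }} of an input context Γ'{Λ{ },Π∘}. -/
def InCtx.prune (G : InCtx) : OutCtx := G.outer.comp G.inner

/-- Depth of an input context. -/
def InCtx.depth (G : InCtx) : Nat := G.outer.depth + G.inner.depth

/-- [Φ]ⁿ : n brackets around an LHS sequent. -/
def LHS.brn : Nat → LHS → LHS
  | 0, Φ => Φ
  | n+1, Φ => LHS.br (LHS.brn n Φ)

/-- [Σ]ⁿ : n brackets around a full sequent (as a full sequent). -/
def FullSeq.nest : Nat → FullSeq → FullSeq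
  | 0, S => S
  | n+1, S => ⟨LHS.emp, RHS.br (FullSeq.nest n S).L (FullSeq.nest n S).R⟩

/-! # Equivalence of sequents (associativity/commutativity/unit of comma) -/

inductive SEqL : LHS → LHS → Prop
  | refl (Φ : LHS) : SEqL Φ Φ
  | symm {a b : LHS} : SEqL a b → SEqL b a
  | trans {a b c : LHS} : SEqL a b → SEqL b c → SEqL a c
  | comm (a b : LHS) : SEqL (a.comma b) (b.comma a)
  | assoc (a b c : LHS) : SEqL ((a.comma b).comma c) (a.comma (b.comma c))
  | unit (a : LHS) : SEqL (LHS.emp.comma a) a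
  | congComma {a a' b b' : LHS} : SEqL a a' → SEqL b b' → SEqL (a.comma b) (a'.comma b')
  | congBr {a a' : LHS} : SEqL a a' → SEqL a.br a'.br

inductive SEqR : RHS → RHS → Prop
  | refl (Ψ : RHS) : SEqR Ψ Ψ
  | symm {a b : RHS} : SEqR a b → SEqR b a
  | trans {a b c : RHS} : SEqR a b → SEqR b c → SEqR a c
  | congBr {Φ Φ' : LHS} {Ψ Ψ' : RHS} :
      SEqL Φ Φ' → SEqR Ψ Ψ' → SEqR (RHS.br Φ Ψ) (RHS.br Φ' Ψ')

def SEq (S T : FullSeq) : Prop := SEqL S.L T.L ∧ SEqR S.R T.R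

/-! # Inference rules -/

inductive RuleName : Type
  | id | botL | andL | andR | orL | orR | impL | impR
  | boxL | boxR | diaL | diaHatL | diaR | cont
  | weak | cut | nec
  | dDiaR | dBoxL | tDiaR | tBoxL | fourDiaR | fourBoxL
  | dSt | tSt | bSt | fourSt | fiveSt
  | s4R | s4L | s4Rdia | s4Lbox
  | sbSt | s5St | s5bSt | sb5St
  deriving DecidableEq

/-- Rule instances: `Step r prems concl` means that inferring the full sequent
`concl` from the list of full sequents `prems` is an instance of the rule `r`. -/
inductive Step : RuleName → List FullSeq → FullSeq → Prop
  /- id: Γ{a•,a∘} -/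
  | id (Γ : OutCtx) (a : Nat) :
      Step .id [] (Γ.fillF ⟨.fml (.var a), .fml (.var a)⟩)
  /- ⊥•: Γ{⊥•,Π∘} -/
  | botL (Γ : OutCtx) (Pn : RHS) :
      Step .botL [] (Γ.fillF ⟨.fml .bot, Pn⟩)
  /- ∧•: from Γ{A•,B•} infer Γ{(A∧B)•} -/
  | andL (Γ : InCtx) (A B : Formula) :
      Step .andL [Γ.fill ((LHS.fml A).comma (.fml B))] (Γ.fill (.fml (A.and B)))
  /- ∧∘: from Γ{A∘} and Γ{B∘} infer Γ{(A∧B)∘} -/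
  | andR (Γ : OutCtx) (A B : Formula) :
      Step .andR [Γ.fillR (.fml A), Γ.fillR (.fml B)] (Γ.fillR (.fml (A.and B)))
  /- ∨•: from Γ{A•,Π∘} and Γ{B•,Π∘} infer Γ{(A∨B)•,Π∘} -/
  | orL (Γ : OutCtx) (Pn : RHS) (A B : Formula) :
      Step .orL [Γ.fillF ⟨.fml A, Pn⟩, Γ.fillF ⟨.fml B, Pn⟩]
        (Γ.fillF ⟨.fml (A.or B), Pn⟩)
  /- ∨∘: from Γ{A∘} (or Γ{B∘}) infer Γ{(A∨B)∘} -/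
  | orR1 (Γ : OutCtx) (A B : Formula) :
      Step .orR [Γ.fillR (.fml A)] (Γ.fillR (.fml (A.or B)))
  | orR2 (Γ : OutCtx) (A B : Formula) :
      Step .orR [Γ.fillR (.fml B)] (Γ.fillR (.fml (A.or B)))
  /- ⊃•: from Γ↓{A∘} and Γ{B•} infer Γ{(A⊃B)•} -/
  | impL (Γ : InCtx) (A B : Formula) :
      Step .impL [Γ.prune.fillR (.fml A), Γ.fill (.fml B)] (Γ.fill (.fml (A.imp B)))
  /- ⊃∘: from Γ{A•,B∘} infer Γ{(A⊃B)∘} -/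
  | impR (Γ : OutCtx) (A B : Formula) :
      Step .impR [Γ.fillF ⟨.fml A, .fml B⟩] (Γ.fillR (.fml (A.imp B)))
  /- □•: from Γ{[A•,Δ]} infer Γ{(□A)•,[Δ]}, output elsewhere resp. in Δ -/
  | boxLIn (Γ : InCtx) (Δ : LHS) (A : Formula) :
      Step .boxL [Γ.fill (LHS.br ((LHS.fml A).comma Δ))]
        (Γ.fill ((LHS.fml A.box).comma Δ.br))
  | boxLOut (Γ : OutCtx) (Δ : FullSeq) (A : Formula) :
      Step .boxL [Γ.fillR (.br ((LHS.fml A).comma Δ.L) Δ.R)]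
        (Γ.fillF ⟨.fml A.box, .br Δ.L Δ.R⟩)
  /- □∘: from Γ{[A∘]} infer Γ{(□A)∘} -/
  | boxR (Γ : OutCtx) (A : Formula) :
      Step .boxR [Γ.fillR (.br .emp (.fml A))] (Γ.fillR (.fml A.box))
  /- ◇•: from Γ{[A•]} infer Γ{(◇A)•} -/
  | diaL (Γ : InCtx) (A : Formula) :
      Step .diaL [Γ.fill (LHS.br (.fml A))] (Γ.fill (.fml A.dia))
  /- ◇̂•: from Γ{[A•],Π∘} infer Γ{(◇A)•,Π∘} -/
  | diaHatL (Γ : OutCtx) (Pn : RHS) (A : Formula) :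
      Step .diaHatL [Γ.fillF ⟨LHS.br (.fml A), Pn⟩] (Γ.fillF ⟨.fml A.dia, Pn⟩)
  /- ◇∘: from Γ{[A∘,Δ]} infer Γ{(◇A)∘,[Δ]} -/
  | diaR (Γ : OutCtx) (Δ : LHS) (A : Formula) :
      Step .diaR [Γ.fillR (.br Δ (.fml A))] (Γ.fillF ⟨Δ.br, .fml A.dia⟩)
  /- cont: from Γ{Δ•,Δ•} infer Γ{Δ•} -/
  | cont (Γ : InCtx) (Δ : LHS) :
      Step .cont [Γ.fill (Δ.comma Δ)] (Γ.fill Δ)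
  /- weak: from Γ{∅} infer Γ{Δ•} -/
  | weak (Γ : InCtx) (Δ : LHS) :
      Step .weak [Γ.fill .emp] (Γ.fill Δ)
  /- cut: from Γ↓{A∘} and Γ{A•} infer Γ{∅} -/
  | cut (Γ : InCtx) (A : Formula) :
      Step .cut [Γ.prune.fillR (.fml A), Γ.fill (.fml A)] (Γ.fill .emp)
  /- nec: from Γ infer [Γ] -/
  | nec (S : FullSeq) :
      Step .nec [S] ⟨.emp, .br S.L S.R⟩
  /- ◇∘d: from Γ{[A∘]} infer Γ{(◇A)∘} -/
  | dDiaR (Γ : OutCtx) (A : Formula) :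
      Step .dDiaR [Γ.fillR (.br .emp (.fml A))] (Γ.fillR (.fml A.dia))
  /- □•d: from Γ{[A•]} infer Γ{(□A)•} -/
  | dBoxL (Γ : InCtx) (A : Formula) :
      Step .dBoxL [Γ.fill (LHS.br (.fml A))] (Γ.fill (.fml A.box))
  /- ◇∘t: from Γ{A∘} infer Γ{(◇A)∘} -/
  | tDiaR (Γ : OutCtx) (A : Formula) :
      Step .tDiaR [Γ.fillR (.fml A)] (Γ.fillR (.fml A.dia))
  /- □•t: from Γ{A•} infer Γ{(□A)•} -/
  | tBoxL (Γ : InCtx) (A : Formula) :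
      Step .tBoxL [Γ.fill (.fml A)] (Γ.fill (.fml A.box))
  /- ◇∘4: from Γ{[(◇A)∘,Δ]} infer Γ{(◇A)∘,[Δ]} -/
  | fourDiaR (Γ : OutCtx) (Δ : LHS) (A : Formula) :
      Step .fourDiaR [Γ.fillR (.br Δ (.fml A.dia))] (Γ.fillF ⟨Δ.br, .fml A.dia⟩)
  /- □•4: from Γ{[(□A)•,Δ]} infer Γ{(□A)•,[Δ]} -/
  | fourBoxLIn (Γ : InCtx) (Δ : LHS) (A : Formula) :
      Step .fourBoxL [Γ.fill (LHS.br ((LHS.fml A.box).comma Δ))]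
        (Γ.fill ((LHS.fml A.box).comma Δ.br))
  | fourBoxLOut (Γ : OutCtx) (Δ : FullSeq) (A : Formula) :
      Step .fourBoxL [Γ.fillR (.br ((LHS.fml A.box).comma Δ.L) Δ.R)]
        (Γ.fillF ⟨.fml A.box, .br Δ.L Δ.R⟩)
  /- d•: from Γ{[∅]} infer Γ{∅} -/
  | dSt (Γ : InCtx) :
      Step .dSt [Γ.fill (LHS.br .emp)] (Γ.fill .emp)
  /- t•: from Γ{[Σ]} infer Γ{Σ} -/
  | tStIn (Γ : InCtx) (Sg : LHS) :
      Step .tSt [Γ.fill Sg.br] (Γ.fill Sg)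
  | tStOut (Γ : OutCtx) (Sg : FullSeq) :
      Step .tSt [Γ.fillR (.br Sg.L Sg.R)] (Γ.fillF Sg)
  /- 4•: from Γ{[Σ]} infer Γ{[[Σ]]} -/
  | fourStIn (Γ : InCtx) (Sg : LHS) :
      Step .fourSt [Γ.fill Sg.br] (Γ.fill Sg.br.br)
  | fourStOut (Γ : OutCtx) (Sg : FullSeq) :
      Step .fourSt [Γ.fillR (.br Sg.L Sg.R)] (Γ.fillR (.br .emp (.br Sg.L Sg.R)))
  /- b•: from Γ{[[Σ],Δ]} infer Γ{Σ,[Δ]} -/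
  | bStIn (Γ : InCtx) (Sg Δ : LHS) :
      Step .bSt [Γ.fill (LHS.br (Sg.br.comma Δ))] (Γ.fill (Sg.comma Δ.br))
  | bStSig (Γ : OutCtx) (Sg : FullSeq) (Δ : LHS) :
      Step .bSt [Γ.fillR (.br Δ (.br Sg.L Sg.R))] (Γ.fillF ⟨Sg.L.comma Δ.br, Sg.R⟩)
  | bStDel (Γ : OutCtx) (Sg : LHS) (Δ : FullSeq) :
      Step .bSt [Γ.fillR (.br (Sg.br.comma Δ.L) Δ.R)] (Γ.fillF ⟨Sg, .br Δ.L Δ.R⟩)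
  /- 5•: from Γ{[[Σ],Δ]} infer Γ{[Σ],[Δ]} -/
  | fiveStIn (Γ : InCtx) (Sg Δ : LHS) :
      Step .fiveSt [Γ.fill (LHS.br (Sg.br.comma Δ))] (Γ.fill (Sg.br.comma Δ.br))
  | fiveStSig (Γ : OutCtx) (Sg : FullSeq) (Δ : LHS) :
      Step .fiveSt [Γ.fillR (.br Δ (.br Sg.L Sg.R))] (Γ.fillF ⟨Δ.br, .br Sg.L Sg.R⟩)
  | fiveStDel (Γ : OutCtx) (Sg : LHS) (Δ : FullSeq) :
      Step .fiveSt [Γ.fillR (.br (Sg.br.comma Δ.L) Δ.R)] (Γ.fillF ⟨Sg.br, .br Δ.L Δ.R⟩)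
  /- s4∘: from Γ{Δ{(◇A)∘}} infer Γ{(◇A)∘,Δ{∅}} -/
  | s4R (Γ Δ : OutCtx) (A : Formula) :
      Step .s4R [Γ.fillF (Δ.fillR (.fml A.dia))] (Γ.fillF ⟨Δ.fillE, .fml A.dia⟩)
  /- s4•: from Γ{Δ{(□A)•}} infer Γ{(□A)•,Δ{∅}} -/
  | s4LIn (Γ : InCtx) (Δ : OutCtx) (A : Formula) :
      Step .s4L [Γ.fill (Δ.fillL (.fml A.box))] (Γ.fill ((LHS.fml A.box).comma Δ.fillE))
  | s4LOut (Γ : OutCtx) (Δ : InCtx) (A : Formula) :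
      Step .s4L [Γ.fillF (Δ.fill (.fml A.box))]
        (Γ.fillF ⟨(LHS.fml A.box).comma (Δ.fill .emp).L, (Δ.fill .emp).R⟩)
  /- s4∘◇: from Γ{[Δ{A∘}]} infer Γ{(◇A)∘,[Δ{∅}]} -/
  | s4Rdia (Γ Δ : OutCtx) (A : Formula) :
      Step .s4Rdia [Γ.fillR (.br (Δ.fillR (.fml A)).L (Δ.fillR (.fml A)).R)]
        (Γ.fillF ⟨Δ.fillE.br, .fml A.dia⟩)
  /- s4•□: from Γ{[Δ{A•}]} infer Γ{(□A)•,[Δ{∅}]} -/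
  | s4LboxIn (Γ : InCtx) (Δ : OutCtx) (A : Formula) :
      Step .s4Lbox [Γ.fill (LHS.br (Δ.fillL (.fml A)))]
        (Γ.fill ((LHS.fml A.box).comma Δ.fillE.br))
  | s4LboxOut (Γ : OutCtx) (Δ : InCtx) (A : Formula) :
      Step .s4Lbox [Γ.fillR (.br (Δ.fill (.fml A)).L (Δ.fill (.fml A)).R)]
        (Γ.fillF ⟨.fml A.box, .br (Δ.fill .emp).L (Δ.fill .emp).R⟩)
  /- sb•: from Γ{Δ{[Σ]ⁿ}} infer Γ{Σ,Δ{∅}}, n the depth of Δ{ } -/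
  | sbStIn (Γ : InCtx) (Δ : OutCtx) (Sg : LHS) :
      Step .sbSt [Γ.fill (Δ.fillL (LHS.brn Δ.depth Sg))] (Γ.fill (Sg.comma Δ.fillE))
  | sbStMid (Γ : OutCtx) (Δ : InCtx) (Sg : LHS) :
      Step .sbSt [Γ.fillF (Δ.fill (LHS.brn Δ.depth Sg))]
        (Γ.fillF ⟨Sg.comma (Δ.fill .emp).L, (Δ.fill .emp).R⟩)
  | sbStOut (Γ Δ : OutCtx) (Sg : FullSeq) :
      Step .sbSt [Γ.fillF (Δ.fillF (FullSeq.nest Δ.depth Sg))]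
        (Γ.fillF ⟨Sg.L.comma Δ.fillE, Sg.R⟩)
  /- s5•: from Γ{Δ{[Σ]}} infer Γ{[Σ],Δ{∅}} -/
  | s5StIn (Γ : InCtx) (Δ : OutCtx) (Sg : LHS) :
      Step .s5St [Γ.fill (Δ.fillL Sg.br)] (Γ.fill (Sg.br.comma Δ.fillE))
  | s5StMid (Γ : OutCtx) (Δ : InCtx) (Sg : LHS) :
      Step .s5St [Γ.fillF (Δ.fill Sg.br)]
        (Γ.fillF ⟨Sg.br.comma (Δ.fill .emp).L, (Δ.fill .emp).R⟩)
  | s5StOut (Γ Δ : OutCtx) (Sg : FullSeq) :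
      Step .s5St [Γ.fillF (Δ.fillF ⟨.emp, .br Sg.L Sg.R⟩)]
        (Γ.fillF ⟨Δ.fillE, .br Sg.L Sg.R⟩)
  /- s5b•: from Γ{Δ{[Σ]ᵏ}} infer Γ{Σ,Δ{∅}}, 1 ≤ k ≤ depth of Δ{ } -/
  | s5bStIn (Γ : InCtx) (Δ : OutCtx) (Sg : LHS) (k : Nat)
      (h1 : 1 ≤ k) (h2 : k ≤ Δ.depth) :
      Step .s5bSt [Γ.fill (Δ.fillL (LHS.brn k Sg))] (Γ.fill (Sg.comma Δ.fillE))
  | s5bStMid (Γ : OutCtx) (Δ : InCtx) (Sg : LHS) (k : Nat)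
      (h1 : 1 ≤ k) (h2 : k ≤ Δ.depth) :
      Step .s5bSt [Γ.fillF (Δ.fill (LHS.brn k Sg))]
        (Γ.fillF ⟨Sg.comma (Δ.fill .emp).L, (Δ.fill .emp).R⟩)
  | s5bStOut (Γ Δ : OutCtx) (Sg : FullSeq) (k : Nat)
      (h1 : 1 ≤ k) (h2 : k ≤ Δ.depth) :
      Step .s5bSt [Γ.fillF (Δ.fillF (FullSeq.nest k Sg))]
        (Γ.fillF ⟨Sg.L.comma Δ.fillE, Sg.R⟩)
  /- sb5•: from Γ{Δ{[Σ]ᵏ}} infer Γ{[Σ],Δ{∅}}, 1 ≤ k ≤ depth of Δ{ } -/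
  | sb5StIn (Γ : InCtx) (Δ : OutCtx) (Sg : LHS) (k : Nat)
      (h1 : 1 ≤ k) (h2 : k ≤ Δ.depth) :
      Step .sb5St [Γ.fill (Δ.fillL (LHS.brn k Sg))] (Γ.fill (Sg.br.comma Δ.fillE))
  | sb5StMid (Γ : OutCtx) (Δ : InCtx) (Sg : LHS) (k : Nat)
      (h1 : 1 ≤ k) (h2 : k ≤ Δ.depth) :
      Step .sb5St [Γ.fillF (Δ.fill (LHS.brn k Sg))]
        (Γ.fillF ⟨Sg.br.comma (Δ.fill .emp).L, (Δ.fill .emp).R⟩)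
  | sb5StOut (Γ Δ : OutCtx) (Sg : FullSeq) (k : Nat)
      (h1 : 1 ≤ k) (h2 : k ≤ Δ.depth) :
      Step .sb5St [Γ.fillF (Δ.fillF (FullSeq.nest k Sg))]
        (Γ.fillF ⟨Δ.fillE, .br Sg.L Sg.R⟩)

/-! # Derivations -/

/-- `Deriv R n S`: the full sequent S has a derivation of height at most n
using the rules in R (sequents are treated up to AC-unit equivalence of
comma). -/
inductive Deriv (R : Set RuleName) : Nat → FullSeq → Prop
  | step {r : RuleName} {prems : List FullSeq} {S S' : FullSeq} {n : Nat} :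
      r ∈ R → Step r prems S → (∀ P ∈ prems, Deriv R n P) → SEq S S' →
      Deriv R (n+1) S'

/-- Provability in the system given by the rule set R. -/
def Provable (R : Set RuleName) (S : FullSeq) : Prop := ∃ n, Deriv R n S

/-- Derivations from a set of hypotheses (for derivability of rules). -/
inductive DerivFrom (R : Set RuleName) (H : Set FullSeq) : FullSeq → Prop
  | hyp {S S' : FullSeq} : S ∈ H → SEq S S' → DerivFrom R H S'
  | step {r : RuleName} {prems : List FullSeq} {S S' : FullSeq} :
      r ∈ R → Step r prems S → (∀ P ∈ prems, DerivFrom R H P) → SEq S S' →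
      DerivFrom R H S'

/-! # Rule sets -/

/-- The rules of NCK. -/
def NCKrules : Set RuleName :=
  {.id, .botL, .andL, .andR, .orL, .orR, .impL, .impR, .boxL, .boxR,
   .diaL, .diaR, .cont}

/-- The rules of NCK' (◇• replaced by ◇̂•). -/
def NCKP : Set RuleName :=
  {.id, .botL, .andL, .andR, .orL, .orR, .impL, .impR, .boxL, .boxR,
   .diaHatL, .diaR, .cont}

/-- X^{↓}: the logical ◇∘- and □•-rules for the axioms in X ⊆ {d,t,4}. -/
def lgRules (X : Set Ax) : Set RuleName := fun r =>
  (Ax.d ∈ X ∧ (r = .dDiaR ∨ r = .dBoxL)) ∨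
  (Ax.t ∈ X ∧ (r = .tDiaR ∨ r = .tBoxL)) ∨
  (Ax.four ∈ X ∧ (r = .fourDiaR ∨ r = .fourBoxL))

/-- The structural rule corresponding to a modal axiom. -/
def stRule : Ax → RuleName
  | .d => .dSt
  | .t => .tSt
  | .b => .bSt
  | .four => .fourSt
  | .five => .fiveSt

/-- Y•: the structural rules for the axioms in Y. -/
def stRules (Y : Set Ax) : Set RuleName := fun r => ∃ y ∈ Y, r = stRule y

/-- X^{↓}_s : the super variant of X^{↓}. -/
def lgRulesS (X : Set Ax) : Set RuleName := fun r =>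
  (r ∈ lgRules X ∧ r ≠ .fourDiaR ∧ r ≠ .fourBoxL) ∨
  (Ax.four ∈ X ∧ (r = .s4R ∨ r = .s4L ∨ r = .s4Rdia ∨ r = .s4Lbox))

/-- Y•_s : the super variant of Y•. -/
def stRulesS (Y : Set Ax) : Set RuleName := fun r =>
  (r ∈ stRules Y ∧ r ≠ .bSt ∧ r ≠ .fiveSt) ∨
  (Ax.b ∈ Y ∧ Ax.five ∉ Y ∧ r = .sbSt) ∨
  (Ax.five ∈ Y ∧ Ax.b ∉ Y ∧ r = .s5St) ∨
  (Ax.b ∈ Y ∧ Ax.five ∈ Y ∧ (r = .s5bSt ∨ r = .sb5St))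

/-- A safe pair of axiom sets. -/
def SafePair (X Y : Set Ax) : Prop :=
  X ⊆ {Ax.t, Ax.four} ∧ Y ⊆ {Ax.d, Ax.b, Ax.five} ∧
  (Ax.t ∈ X → Ax.five ∈ Y → Ax.b ∈ Y) ∧
  ((Ax.b ∈ Y ∨ Ax.five ∈ Y) → Ax.four ∈ X)

/-!
Every super rule is derived by iterating its one-level ordinary rule along the context `Δ{ }`:
the part being moved (`□A•`, `◇A∘`, or a bracket `[Σ]`) leaves one bracket at a time, from the
innermost level outwards. For `s4∘◇` and `s4•□` the first of these steps is `◇∘` resp. `□•`,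
the others are `◇∘4` resp. `□•4`. For `s5b•` and `sb5•`, `5•` carries the bracket `[Σ]ᵏ`
unchanged through the innermost levels, and `b•` then strips one bracket per level on the
remaining `k` resp. `k - 1` levels. Conversely, every ordinary rule is the instance of its super
rule with a context `Δ{ }` of depth one.
-/

inductive Steps {α : Type*} (M : α → α → Prop) : ℕ → α → α → Prop
  | refl (x : α) : Steps M 0 x x
  | tail {n : ℕ} {x y z : α} : Steps M n x y → M y z → Steps M (n + 1) x z

namespace Steps

variable {α : Type*} {M M' : α → α → Prop}

theorem mono (hM : ∀ x y, M x y → M' x y) {n : ℕ} {x y : α} (h : Steps M n x y) :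
    Steps M' n x y := by
  induction h with
  | refl x => exact .refl x
  | tail _ hyz ih => exact ih.tail (hM _ _ hyz)

theorem append {m n : ℕ} {x y z : α} (hxy : Steps M m x y) (hyz : Steps M n y z) :
    Steps M (m + n) x z := by
  induction hyz with
  | refl => exact hxy
  | tail _ h ih => exact (ih hxy).tail h

theorem split {m : ℕ} : ∀ {n : ℕ} {x z : α}, Steps M (m + n) x z →
    ∃ y, Steps M m x y ∧ Steps M n y z
  | 0, _, _, h => ⟨_, h, .refl _⟩
  | n + 1, _, _, .tail h hz =>
    let ⟨y, hxy, hyz⟩ := split h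
    ⟨y, hxy, hyz.tail hz⟩

end Steps

/-- A part of shape `f a` takes the shape `g a` when it is moved out of one bracket. -/
def Lift {α β : Type*} (f g : β → α) (x y : α) : Prop := ∃ a, x = f a ∧ y = g a

namespace Lift

variable {α β : Type*}

theorem steps_self (f : β → α) (a : β) : ∀ n, Steps (Lift f f) n (f a) (f a)
  | 0 => .refl _
  | n + 1 => (steps_self f a n).tail ⟨a, rfl, rfl⟩

theorem steps_then_self (f g : β → α) (a : β) (n : ℕ) :
    Steps (Lift f g ⊔ Lift g g) (n + 1) (f a) (g a) := by
  have first : Steps (Lift f g) 1 (f a) (g a) := (Steps.refl _).tail ⟨a, rfl, rfl⟩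
  have := (first.mono fun _ _ => Or.inl).append ((steps_self g a n).mono fun _ _ => Or.inr)
  rwa [Nat.add_comm] at this

theorem steps_iterate (w : α → α) : ∀ n x, Steps (Lift w id) n (w^[n] x) x
  | 0, x => .refl x
  | n + 1, x => (steps_iterate w n (w x)).tail ⟨x, rfl, rfl⟩

theorem steps_keep_iterate (w : α → α) (z : α) (a j : ℕ) :
    Steps (Lift w id ⊔ Lift w w) (a + j) (w^[j + 1] z) (w z) := by
  have keep := steps_self w (w^[j] z) a
  rw [← Function.iterate_succ_apply' w j z] at keep
  exact (keep.mono fun _ _ => Or.inr).append ((steps_iterate w j (w z)).mono fun _ _ => Or.inl)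

theorem steps_iterate_id_of_le (w : α → α) (z : α) {k n : ℕ} (hk : 1 ≤ k) (hkn : k ≤ n) :
    Steps (Lift w id ⊔ Lift w w) n (w^[k] z) z := by
  obtain ⟨j, rfl⟩ := Nat.exists_eq_add_of_le' hk
  obtain ⟨a, rfl⟩ := Nat.exists_eq_add_of_le hkn
  have := (steps_keep_iterate w z a j).tail (Or.inl ⟨z, rfl, rfl⟩)
  rwa [show a + j + 1 = j + 1 + a by omega] at this

theorem steps_iterate_wrap_of_le (w : α → α) (z : α) {k n : ℕ} (hk : 1 ≤ k) (hkn : k ≤ n) :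
    Steps (Lift w id ⊔ Lift w w) n (w^[k] z) (w z) := by
  obtain ⟨j, rfl⟩ := Nat.exists_eq_add_of_le' hk
  obtain ⟨a, rfl⟩ := Nat.exists_eq_add_of_le hkn
  have := steps_keep_iterate w z (a + 1) j
  rwa [show a + 1 + j = j + 1 + a by omega] at this

end Lift

namespace SEqL

theorem congr_left {a a' b : LHS} (h : SEqL a a') : SEqL (a.comma b) (a'.comma b) :=
  congComma h (refl b)

theorem congr_right {a b b' : LHS} (h : SEqL b b') : SEqL (a.comma b) (a.comma b') :=
  congComma (refl a) h

theorem unit_right (a : LHS) : SEqL (a.comma .emp) a := (comm a .emp).trans (unit a)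

theorem left_comm (a b c : LHS) : SEqL (a.comma (b.comma c)) (b.comma (a.comma c)) :=
  ((assoc a b c).symm.trans (congr_left (comm a b))).trans (assoc b a c)

end SEqL

namespace SEq

theorem refl (S : FullSeq) : SEq S S := ⟨.refl _, .refl _⟩

theorem symm {S T : FullSeq} (h : SEq S T) : SEq T S := ⟨h.1.symm, h.2.symm⟩

theorem trans {S T U : FullSeq} (h : SEq S T) (h' : SEq T U) : SEq S U :=
  ⟨h.1.trans h'.1, h.2.trans h'.2⟩

end SEq

namespace OutCtx

theorem fillL_congr (C : OutCtx) {a b : LHS} (h : SEqL a b) : SEqL (C.fillL a) (C.fillL b) := by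
  induction C with
  | hole Φ => exact .congr_right h
  | cons Φ C ih => exact .congr_right (.congBr ih)

theorem fillF_congr (C : OutCtx) {S T : FullSeq} (h : SEq S T) : SEq (C.fillF S) (C.fillF T) := by
  induction C with
  | hole Φ => exact ⟨.congr_right h.1, h.2⟩
  | cons Φ C ih => exact ⟨.refl _, .congBr ih.1 ih.2⟩

theorem fillR_congr (C : OutCtx) {Ψ Ψ' : RHS} (h : SEqR Ψ Ψ') :
    SEq (C.fillR Ψ) (C.fillR Ψ') := by
  induction C with
  | hole Φ => exact ⟨.refl _, h⟩
  | cons Φ C ih => exact ⟨.refl _, .congBr ih.1 ih.2⟩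

theorem fillL_emp (C : OutCtx) : SEqL (C.fillL .emp) C.fillE := by
  induction C with
  | hole Φ => exact .unit_right Φ
  | cons Φ C ih => exact .congr_right (.congBr ih)

theorem fillF_emp (C : OutCtx) (Ψ : RHS) : SEq (C.fillF ⟨.emp, Ψ⟩) (C.fillR Ψ) := by
  induction C with
  | hole Φ => exact ⟨.unit_right Φ, .refl _⟩
  | cons Φ C ih => exact ⟨.refl _, .congBr ih.1 ih.2⟩

theorem comp_fillF (C D : OutCtx) (S : FullSeq) :
    SEq ((C.comp D).fillF S) (C.fillF (D.fillF S)) := by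
  induction C with
  | hole Φ =>
    cases D with
    | hole Φ' => exact ⟨.assoc _ _ _, .refl _⟩
    | cons Φ' C' => exact .refl _
  | cons Φ C ih => exact ⟨.refl _, .congBr ih.1 ih.2⟩

/-- `C.addAtHole Φ` is `C{Φ, { }}`. -/
def addAtHole : OutCtx → LHS → OutCtx
  | .hole Φ₀, Φ => .hole (Φ₀.comma Φ)
  | .cons Φ₀ C, Φ => .cons Φ₀ (C.addAtHole Φ)

/-- `C.descend Φ` is `C{Φ, [{ }]}`. -/
def descend : OutCtx → LHS → OutCtx
  | .hole Φ₀, Φ => .cons (Φ₀.comma Φ) (.hole .emp)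
  | .cons Φ₀ C, Φ => .cons Φ₀ (C.descend Φ)

theorem addAtHole_fillR (C : OutCtx) (Φ : LHS) (Ψ : RHS) :
    (C.addAtHole Φ).fillR Ψ = C.fillF ⟨Φ, Ψ⟩ := by
  induction C with
  | hole Φ₀ => rfl
  | cons Φ₀ C ih => simp [addAtHole, fillR, fillF, ih]

theorem addAtHole_fillL (C : OutCtx) (Φ X : LHS) :
    SEqL ((C.addAtHole Φ).fillL X) (C.fillL (Φ.comma X)) := by
  induction C with
  | hole Φ₀ => exact .assoc Φ₀ Φ X
  | cons Φ₀ C ih => exact .congr_right (.congBr ih)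

theorem addAtHole_fillF (C : OutCtx) (Φ : LHS) (S : FullSeq) :
    SEq ((C.addAtHole Φ).fillF S) (C.fillF ⟨Φ.comma S.L, S.R⟩) := by
  induction C with
  | hole Φ₀ => exact ⟨.assoc Φ₀ Φ S.L, .refl _⟩
  | cons Φ₀ C ih => exact ⟨.refl _, .congBr ih.1 ih.2⟩

theorem descend_fillL (C : OutCtx) (Φ X : LHS) :
    SEqL ((C.descend Φ).fillL X) (C.fillL (Φ.comma X.br)) := by
  induction C with
  | hole Φ₀ => exact (SEqL.assoc Φ₀ Φ _).trans (.congr_right (.congr_right (.congBr (.unit X))))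
  | cons Φ₀ C ih => exact .congr_right (.congBr ih)

theorem descend_fillF (C : OutCtx) (Φ : LHS) (S : FullSeq) :
    SEq ((C.descend Φ).fillF S) (C.fillF ⟨Φ, .br S.L S.R⟩) := by
  induction C with
  | hole Φ₀ => exact ⟨.refl _, .congBr (.unit _) (.refl _)⟩
  | cons Φ₀ C ih => exact ⟨.refl _, .congBr ih.1 ih.2⟩

end OutCtx

namespace InCtx

theorem fill_congr (G : InCtx) {a b : LHS} (h : SEqL a b) : SEq (G.fill a) (G.fill b) :=
  G.outer.fillF_congr ⟨G.inner.fillL_congr h, .refl _⟩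

def addAtHole (G : InCtx) (Φ : LHS) : InCtx := ⟨G.outer, G.inner.addAtHole Φ, G.out⟩

def descend (G : InCtx) (Φ : LHS) : InCtx := ⟨G.outer, G.inner.descend Φ, G.out⟩

theorem addAtHole_fill (G : InCtx) (Φ X : LHS) :
    SEq ((G.addAtHole Φ).fill X) (G.fill (Φ.comma X)) :=
  G.outer.fillF_congr ⟨G.inner.addAtHole_fillL Φ X, .refl _⟩

theorem descend_fill (G : InCtx) (Φ X : LHS) :
    SEq ((G.descend Φ).fill X) (G.fill (Φ.comma X.br)) :=
  G.outer.fillF_congr ⟨G.inner.descend_fillL Φ X, .refl _⟩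

end InCtx

theorem LHS.brn_eq_iterate (n : ℕ) : LHS.brn n = LHS.br^[n] := by
  induction n with
  | zero => rfl
  | succ n ih => funext Φ; rw [Function.iterate_succ_apply', ← ih]; rfl

theorem FullSeq.nest_eq_iterate (n : ℕ) : FullSeq.nest n = (FullSeq.nest 1)^[n] := by
  induction n with
  | zero => rfl
  | succ n ih => funext S; rw [Function.iterate_succ_apply', ← ih]; rfl

section Derivations

variable {R : Set RuleName}

theorem Deriv.mono {n m : ℕ} {S : FullSeq} (h : Deriv R n S) (hnm : n ≤ m) : Deriv R m S := by
  induction h generalizing m with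
  | step hr st _ hs ih =>
    obtain ⟨m, rfl⟩ := Nat.exists_eq_add_of_lt hnm
    exact .step hr st (fun P hP => ih P hP (by omega)) hs

theorem Provable.congr {S S' : FullSeq} (h : Provable R S) (e : SEq S S') : Provable R S' := by
  obtain ⟨n, ⟨hr, st, hp, hs⟩⟩ := h
  exact ⟨_, .step hr st hp (hs.trans e)⟩

theorem Provable.of_step {r : RuleName} {prems : List FullSeq} {S : FullSeq} (hr : r ∈ R)
    (st : Step r prems S) (hp : ∀ P ∈ prems, Provable R P) : Provable R S := by
  have ⟨n, hn⟩ : ∃ n, ∀ P ∈ prems, Deriv R n P := by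
    clear st
    induction prems with
    | nil => exact ⟨0, by simp⟩
    | cons Q prems ih =>
      obtain ⟨n, hn⟩ := ih fun P hP => hp P (List.mem_cons_of_mem _ hP)
      obtain ⟨m, hm⟩ := hp Q List.mem_cons_self
      refine ⟨max n m, fun P hP => ?_⟩
      rcases List.mem_cons.mp hP with rfl | hP
      · exact hm.mono (le_max_right _ _)
      · exact (hn P hP).mono (le_max_left _ _)
  exact ⟨n + 1, .step hr st hn (SEq.refl S)⟩

theorem Provable.of_step₁ {r : RuleName} {P S : FullSeq} (hr : r ∈ R) (st : Step r [P] S)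
    (hP : Provable R P) : Provable R S :=
  .of_step hr st (by simpa using hP)

def Admissible (R : Set RuleName) (r : RuleName) : Prop :=
  ∀ prems S, Step r prems S → (∀ P ∈ prems, Provable R P) → Provable R S

theorem admissible_of_mem {r : RuleName} (hr : r ∈ R) : Admissible R r :=
  fun _ _ st hp => .of_step hr st hp

theorem Provable.of_admissible {R' : Set RuleName} (h : ∀ r ∈ R, Admissible R' r)
    {S : FullSeq} (hS : Provable R S) : Provable R' S := by
  obtain ⟨n, hS⟩ := hS
  induction hS with
  | step hr st _ hs ih => exact (h _ hr _ _ st ih).congr hs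

end Derivations

section Climbing

variable {R : Set RuleName}

/-- The two fields are the two positions of the output formula: outside the bracket that `X`
leaves, or inside it. -/
structure LiftsInput (R : Set RuleName) (M : LHS → LHS → Prop) : Prop where
  inCtx : ∀ (G : InCtx) (Δ X Y : LHS), M X Y →
    Provable R (G.fill (.br (X.comma Δ))) → Provable R (G.fill (Y.comma Δ.br))
  outCtx : ∀ (Γ : OutCtx) (Δ : FullSeq) (X Y : LHS), M X Y →
    Provable R (Γ.fillR (.br (X.comma Δ.L) Δ.R)) → Provable R (Γ.fillF ⟨Y, .br Δ.L Δ.R⟩)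

def LiftsOutput (R : Set RuleName) (N : FullSeq → FullSeq → Prop) : Prop :=
  ∀ (Γ : OutCtx) (Δ : LHS) (T U : FullSeq), N T U →
    Provable R (Γ.fillR (.br (Δ.comma T.L) T.R)) → Provable R (Γ.fillF ⟨U.L.comma Δ.br, U.R⟩)

theorem LiftsInput.sup {M M' : LHS → LHS → Prop} (h : LiftsInput R M) (h' : LiftsInput R M') :
    LiftsInput R (M ⊔ M') where
  inCtx G Δ X Y := Or.rec (h.inCtx G Δ X Y) (h'.inCtx G Δ X Y)
  outCtx Γ Δ X Y := Or.rec (h.outCtx Γ Δ X Y) (h'.outCtx Γ Δ X Y)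

theorem LiftsOutput.sup {N N' : FullSeq → FullSeq → Prop} (h : LiftsOutput R N)
    (h' : LiftsOutput R N') : LiftsOutput R (N ⊔ N') :=
  fun Γ Δ T U => Or.rec (h Γ Δ T U) (h' Γ Δ T U)

namespace LiftsInput

variable {M : LHS → LHS → Prop}

theorem climb_inCtx (hM : LiftsInput R M) (D : OutCtx) (G : InCtx) {X Y : LHS}
    (hXY : Steps M D.depth X Y) (h : Provable R (G.fill (D.fillL X))) :
    Provable R (G.fill (Y.comma D.fillE)) := by
  induction D generalizing G Y with
  | hole Φ =>
    cases hXY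
    exact h.congr (G.fill_congr (.comm Φ X))
  | cons Φ C ih =>
    obtain _ | ⟨hXZ, hZY⟩ := hXY
    have hZ := ih (G.descend Φ) hXZ (h.congr (G.descend_fill Φ _).symm)
    have hY := hM.inCtx (G.addAtHole Φ) _ _ _ hZY
      (hZ.congr ((G.descend_fill Φ _).trans (G.addAtHole_fill Φ _).symm))
    exact hY.congr ((G.addAtHole_fill Φ _).trans (G.fill_congr (.left_comm _ _ _)))

theorem climb_outCtx (hM : LiftsInput R M) (D Γ : OutCtx) {X Y L : LHS} {Ψ : RHS}
    (hXY : Steps M D.depth X Y) (h : Provable R (Γ.fillF (D.fillF ⟨X.comma L, Ψ⟩))) :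
    Provable R (Γ.fillF ⟨Y.comma (D.fillF ⟨L, Ψ⟩).L, (D.fillF ⟨L, Ψ⟩).R⟩) := by
  induction D generalizing Γ Y with
  | hole Φ =>
    cases hXY
    exact h.congr (Γ.fillF_congr ⟨.left_comm Φ X L, .refl _⟩)
  | cons Φ C ih =>
    obtain _ | ⟨hXZ, hZY⟩ := hXY
    have hZ := ih (Γ.descend Φ) hXZ (h.congr (Γ.descend_fillF Φ _).symm)
    have hY := hM.outCtx (Γ.addAtHole Φ) _ _ _ hZY
      (by rw [OutCtx.addAtHole_fillR]; exact hZ.congr (Γ.descend_fillF Φ _))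
    exact hY.congr ((Γ.addAtHole_fillF Φ _).trans (Γ.fillF_congr ⟨.comm _ _, .refl _⟩))

theorem climb (hM : LiftsInput R M) (D : InCtx) (Γ : OutCtx) {X Y : LHS}
    (hXY : Steps M D.depth X Y) (h : Provable R (Γ.fillF (D.fill X))) :
    Provable R (Γ.fillF ⟨Y.comma (D.fill .emp).L, (D.fill .emp).R⟩) := by
  obtain ⟨o, i, p⟩ := D
  obtain ⟨Z, hXZ, hZY⟩ := Steps.split (by rwa [InCtx.depth, Nat.add_comm] at hXY)
  let G : InCtx := ⟨Γ.comp o, .hole .emp, p⟩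
  have hG (V : LHS) : SEq (G.fill V) (Γ.fillF (o.fillF ⟨V, p⟩)) :=
    (Γ.comp_fillF o _).trans (Γ.fillF_congr (o.fillF_congr ⟨.unit V, .refl _⟩))
  have hZ := climb_inCtx hM i G hXZ (h.congr (hG _).symm)
  have hY := climb_outCtx hM o Γ hZY (hZ.congr (hG _))
  have e : SEq (o.fillF ⟨i.fillE, p⟩) (o.fillF ⟨i.fillL .emp, p⟩) :=
    o.fillF_congr ⟨i.fillL_emp.symm, .refl _⟩
  exact hY.congr (Γ.fillF_congr ⟨.congr_right e.1, e.2⟩)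

end LiftsInput

theorem LiftsOutput.climb {N : FullSeq → FullSeq → Prop} (hN : LiftsOutput R N) (D Γ : OutCtx)
    {T U : FullSeq} (hTU : Steps N D.depth T U) (h : Provable R (Γ.fillF (D.fillF T))) :
    Provable R (Γ.fillF ⟨U.L.comma D.fillE, U.R⟩) := by
  induction D generalizing Γ U with
  | hole Φ =>
    cases hTU
    exact h.congr (Γ.fillF_congr ⟨.comm Φ T.L, .refl _⟩)
  | cons Φ C ih =>
    obtain _ | ⟨hTV, hVU⟩ := hTU
    have hV := ih (Γ.descend Φ) hTV (h.congr (Γ.descend_fillF Φ _).symm)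
    have hU := hN (Γ.addAtHole Φ) _ _ _ hVU (by
      rw [OutCtx.addAtHole_fillR]
      exact hV.congr ((Γ.descend_fillF Φ _).trans
        (Γ.fillF_congr ⟨.refl _, .congBr (.comm _ _) (.refl _)⟩)))
    exact hU.congr ((Γ.addAtHole_fillF Φ _).trans (Γ.fillF_congr ⟨.left_comm _ _ _, .refl _⟩))

end Climbing

section Lifts

variable {R : Set RuleName}

theorem liftsInput_boxL (h : .boxL ∈ R) :
    LiftsInput R (Lift LHS.fml fun A => .fml A.box) where
  inCtx := by
    rintro G Δ _ _ ⟨A, rfl, rfl⟩ hp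
    exact .of_step₁ h (Step.boxLIn G Δ A) hp
  outCtx := by
    rintro Γ Δ _ _ ⟨A, rfl, rfl⟩ hp
    exact .of_step₁ h (Step.boxLOut Γ Δ A) hp

theorem liftsInput_fourBoxL (h : .fourBoxL ∈ R) :
    LiftsInput R (Lift (fun A : Formula => LHS.fml A.box) fun A => LHS.fml A.box) where
  inCtx := by
    rintro G Δ _ _ ⟨A, rfl, rfl⟩ hp
    exact .of_step₁ h (Step.fourBoxLIn G Δ A) hp
  outCtx := by
    rintro Γ Δ _ _ ⟨A, rfl, rfl⟩ hp
    exact .of_step₁ h (Step.fourBoxLOut Γ Δ A) hp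

theorem liftsInput_bSt (h : .bSt ∈ R) : LiftsInput R (Lift LHS.br id) where
  inCtx := by
    rintro G Δ _ Sg ⟨_, rfl, rfl⟩ hp
    exact .of_step₁ h (Step.bStIn G Sg Δ) hp
  outCtx := by
    rintro Γ Δ _ Sg ⟨_, rfl, rfl⟩ hp
    exact .of_step₁ h (Step.bStDel Γ Sg Δ) hp

theorem liftsInput_fiveSt (h : .fiveSt ∈ R) : LiftsInput R (Lift LHS.br LHS.br) where
  inCtx := by
    rintro G Δ _ _ ⟨Sg, rfl, rfl⟩ hp
    exact .of_step₁ h (Step.fiveStIn G Sg Δ) hp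
  outCtx := by
    rintro Γ Δ _ _ ⟨Sg, rfl, rfl⟩ hp
    exact .of_step₁ h (Step.fiveStDel Γ Sg Δ) hp

theorem liftsOutput_of_step {β : Type*} {r : RuleName} (hr : r ∈ R) {f g : β → RHS}
    (st : ∀ (Γ : OutCtx) (Δ : LHS) (a : β),
      Step r [Γ.fillR (.br Δ (f a))] (Γ.fillF ⟨Δ.br, g a⟩)) :
    LiftsOutput R (Lift (fun a => ⟨.emp, f a⟩) fun a => ⟨.emp, g a⟩) := by
  rintro Γ Δ _ _ ⟨a, rfl, rfl⟩ hp
  exact (Provable.of_step₁ hr (st Γ Δ a) (hp.congr (Γ.fillR_congr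
    (.congBr (.unit_right Δ) (.refl _))))).congr (Γ.fillF_congr ⟨(SEqL.unit _).symm, .refl _⟩)

theorem liftsOutput_bSt (h : .bSt ∈ R) : LiftsOutput R (Lift (FullSeq.nest 1) id) := by
  rintro Γ Δ _ Sg ⟨_, rfl, rfl⟩ hp
  exact .of_step₁ h (Step.bStSig Γ Sg Δ) (hp.congr (Γ.fillR_congr
    (.congBr (.unit_right Δ) (.refl _))))

theorem liftsOutput_fiveSt (h : .fiveSt ∈ R) :
    LiftsOutput R (Lift (FullSeq.nest 1) (FullSeq.nest 1)) :=
  liftsOutput_of_step h fun Γ Δ Sg => Step.fiveStSig Γ Sg Δ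

end Lifts

section SuperRules

variable {R : Set RuleName}

theorem admissible_s4R (h4 : .fourDiaR ∈ R) : Admissible R .s4R := by
  intro _ _ st hp
  cases st with | s4R Γ Δ A => ?_
  have h := (hp _ List.mem_cons_self).congr (Γ.fillF_congr (Δ.fillF_emp _).symm)
  have := (liftsOutput_of_step h4 Step.fourDiaR).climb Δ Γ (Lift.steps_self _ A _) h
  exact this.congr (Γ.fillF_congr ⟨.unit _, .refl _⟩)

theorem admissible_s4Rdia (hd : .diaR ∈ R) (h4 : .fourDiaR ∈ R) : Admissible R .s4Rdia := by
  intro _ _ st hp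
  cases st with | s4Rdia Γ Δ A => ?_
  have h := (hp _ List.mem_cons_self).congr ((Γ.fillR_congr (.congBr (Δ.fillF_emp _).symm.1
    (Δ.fillF_emp _).symm.2)).trans (Γ.fillF_emp _).symm)
  have := ((liftsOutput_of_step hd Step.diaR).sup (liftsOutput_of_step h4 Step.fourDiaR)).climb
    (.cons .emp Δ) Γ (Lift.steps_then_self _ _ A _) h
  exact this.congr (Γ.fillF_congr ⟨(SEqL.unit _).trans (.unit _), .refl _⟩)

theorem admissible_s4L (h4 : .fourBoxL ∈ R) : Admissible R .s4L := by
  intro _ _ st hp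
  cases st with
  | s4LIn Γ Δ A =>
    have h := hp _ List.mem_cons_self
    exact (liftsInput_fourBoxL h4).climb_inCtx Δ Γ (Lift.steps_self _ A _) h
  | s4LOut Γ Δ A =>
    have h := hp _ List.mem_cons_self
    exact (liftsInput_fourBoxL h4).climb Δ Γ (Lift.steps_self _ A _) h

theorem admissible_s4Lbox (hb : .boxL ∈ R) (h4 : .fourBoxL ∈ R) : Admissible R .s4Lbox := by
  intro _ _ st hp
  have hM := (liftsInput_boxL hb).sup (liftsInput_fourBoxL h4)
  cases st with
  | s4LboxIn Γ Δ A =>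
    have h := hp _ List.mem_cons_self
    have := hM.climb_inCtx (.cons .emp Δ) Γ (Lift.steps_then_self _ _ A _)
      (h.congr (Γ.fill_congr (SEqL.unit _).symm))
    exact this.congr (Γ.fill_congr (.congr_right (.unit _)))
  | s4LboxOut Γ Δ A =>
    have h := hp _ List.mem_cons_self
    have := hM.climb ⟨.cons .emp Δ.outer, Δ.inner, Δ.out⟩ Γ
      (by simpa only [InCtx.depth, OutCtx.depth, Nat.add_right_comm]
        using Lift.steps_then_self _ _ A Δ.depth) (h.congr (Γ.fillF_emp _).symm)
    exact this.congr (Γ.fillF_congr ⟨.unit_right _, .refl _⟩)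

theorem admissible_sbSt (hb : .bSt ∈ R) : Admissible R .sbSt := by
  intro _ _ st hp
  cases st with
  | sbStIn Γ Δ Sg =>
    have h := hp _ List.mem_cons_self
    rw [LHS.brn_eq_iterate] at h
    exact (liftsInput_bSt hb).climb_inCtx Δ Γ (Lift.steps_iterate _ _ Sg) h
  | sbStMid Γ Δ Sg =>
    have h := hp _ List.mem_cons_self
    rw [LHS.brn_eq_iterate] at h
    exact (liftsInput_bSt hb).climb Δ Γ (Lift.steps_iterate _ _ Sg) h
  | sbStOut Γ Δ Sg =>
    have h := hp _ List.mem_cons_self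
    rw [FullSeq.nest_eq_iterate] at h
    exact (liftsOutput_bSt hb).climb Δ Γ (Lift.steps_iterate _ _ Sg) h

theorem admissible_s5St (h5 : .fiveSt ∈ R) : Admissible R .s5St := by
  intro _ _ st hp
  cases st with
  | s5StIn Γ Δ Sg =>
    have h := hp _ List.mem_cons_self
    exact (liftsInput_fiveSt h5).climb_inCtx Δ Γ (Lift.steps_self _ Sg _) h
  | s5StMid Γ Δ Sg =>
    have h := hp _ List.mem_cons_self
    exact (liftsInput_fiveSt h5).climb Δ Γ (Lift.steps_self _ Sg _) h
  | s5StOut Γ Δ Sg =>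
    have h := hp _ List.mem_cons_self
    have := (liftsOutput_fiveSt h5).climb Δ Γ (Lift.steps_self _ Sg _) h
    exact this.congr (Γ.fillF_congr ⟨.unit _, .refl _⟩)

theorem admissible_s5bSt (hb : .bSt ∈ R) (h5 : .fiveSt ∈ R) : Admissible R .s5bSt := by
  intro _ _ st hp
  cases st with
  | s5bStIn Γ Δ Sg k hk hkn =>
    have h := hp _ List.mem_cons_self
    rw [LHS.brn_eq_iterate] at h
    exact ((liftsInput_bSt hb).sup (liftsInput_fiveSt h5)).climb_inCtx Δ Γ
      (Lift.steps_iterate_id_of_le _ Sg hk hkn) h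
  | s5bStMid Γ Δ Sg k hk hkn =>
    have h := hp _ List.mem_cons_self
    rw [LHS.brn_eq_iterate] at h
    exact ((liftsInput_bSt hb).sup (liftsInput_fiveSt h5)).climb Δ Γ
      (Lift.steps_iterate_id_of_le _ Sg hk hkn) h
  | s5bStOut Γ Δ Sg k hk hkn =>
    have h := hp _ List.mem_cons_self
    rw [FullSeq.nest_eq_iterate] at h
    exact ((liftsOutput_bSt hb).sup (liftsOutput_fiveSt h5)).climb Δ Γ
      (Lift.steps_iterate_id_of_le _ Sg hk hkn) h

theorem admissible_sb5St (hb : .bSt ∈ R) (h5 : .fiveSt ∈ R) : Admissible R .sb5St := by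
  intro _ _ st hp
  cases st with
  | sb5StIn Γ Δ Sg k hk hkn =>
    have h := hp _ List.mem_cons_self
    rw [LHS.brn_eq_iterate] at h
    exact ((liftsInput_bSt hb).sup (liftsInput_fiveSt h5)).climb_inCtx Δ Γ
      (Lift.steps_iterate_wrap_of_le _ Sg hk hkn) h
  | sb5StMid Γ Δ Sg k hk hkn =>
    have h := hp _ List.mem_cons_self
    rw [LHS.brn_eq_iterate] at h
    exact ((liftsInput_bSt hb).sup (liftsInput_fiveSt h5)).climb Δ Γ
      (Lift.steps_iterate_wrap_of_le _ Sg hk hkn) h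
  | sb5StOut Γ Δ Sg k hk hkn =>
    have h := hp _ List.mem_cons_self
    rw [FullSeq.nest_eq_iterate] at h
    have := ((liftsOutput_bSt hb).sup (liftsOutput_fiveSt h5)).climb Δ Γ
      (Lift.steps_iterate_wrap_of_le _ Sg hk hkn) h
    exact this.congr (Γ.fillF_congr ⟨.unit _, .refl _⟩)

end SuperRules

/-- The depth-one output context `[Δ, { }]`. -/
def OutCtx.bracket (Δ : LHS) : OutCtx := .cons .emp (.hole Δ)

/-- The depth-one input context `[{ }, Δ]`, for a full sequent `Δ`. -/
def InCtx.bracket (Δ : FullSeq) : InCtx := ⟨.cons .emp (.hole .emp), .hole Δ.L, Δ.R⟩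

theorem OutCtx.bracket_fillL (Δ X : LHS) : SEqL ((bracket Δ).fillL X) (.br (X.comma Δ)) :=
  (SEqL.unit _).trans (.congBr (.comm _ _))

theorem OutCtx.bracket_fillE (Δ : LHS) : SEqL (bracket Δ).fillE Δ.br := SEqL.unit _

theorem OutCtx.bracket_fillF (Γ : OutCtx) (Δ : LHS) (Ψ : RHS) :
    SEq (Γ.fillF ((bracket Δ).fillF ⟨.emp, Ψ⟩)) (Γ.fillR (.br Δ Ψ)) :=
  (Γ.fillF_emp _).trans (Γ.fillR_congr (.congBr (.unit_right Δ) (.refl _)))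

theorem InCtx.bracket_fill (Γ : OutCtx) (Δ : FullSeq) (X : LHS) :
    SEq (Γ.fillF ((bracket Δ).fill X)) (Γ.fillR (.br (X.comma Δ.L) Δ.R)) :=
  (Γ.fillF_emp _).trans (Γ.fillR_congr (.congBr ((SEqL.unit _).trans (.comm _ _)) (.refl _)))

theorem InCtx.bracket_fill_emp (Γ : OutCtx) (Δ : FullSeq) (X : LHS) :
    SEq (Γ.fillF ⟨X.comma ((bracket Δ).fill .emp).L, ((bracket Δ).fill .emp).R⟩)
      (Γ.fillF ⟨X, .br Δ.L Δ.R⟩) :=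
  Γ.fillF_congr ⟨.unit_right X, .congBr ((SEqL.unit _).trans (.unit_right _)) (.refl _)⟩

section OrdinaryRules

variable {R : Set RuleName}

theorem admissible_fourDiaR (h : .s4R ∈ R) : Admissible R .fourDiaR := by
  intro _ _ st hp
  cases st with
  | fourDiaR Γ Δ A =>
    have h' := (hp _ List.mem_cons_self).congr (Γ.fillF_emp _).symm
    exact (Provable.of_step₁ h (Step.s4R Γ (.bracket Δ) A) h').congr
      (Γ.fillF_congr ⟨.unit _, .refl _⟩)

theorem admissible_fourBoxL (h : .s4L ∈ R) : Admissible R .fourBoxL := by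
  intro _ _ st hp
  cases st with
  | fourBoxLIn Γ Δ A =>
    have h' := (hp _ List.mem_cons_self).congr (Γ.fill_congr (OutCtx.bracket_fillL Δ _).symm)
    exact (Provable.of_step₁ h (Step.s4LIn Γ (.bracket Δ) A) h').congr
      (Γ.fill_congr (.congr_right (OutCtx.bracket_fillE Δ)))
  | fourBoxLOut Γ Δ A =>
    have h' := (hp _ List.mem_cons_self).congr (InCtx.bracket_fill Γ Δ _).symm
    exact (Provable.of_step₁ h (Step.s4LOut Γ (.bracket Δ) A) h').congr
      (InCtx.bracket_fill_emp Γ Δ _)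

theorem admissible_bSt_of_sbSt (h : .sbSt ∈ R) : Admissible R .bSt := by
  intro _ _ st hp
  cases st with
  | bStIn Γ Sg Δ =>
    have h' := (hp _ List.mem_cons_self).congr (Γ.fill_congr (OutCtx.bracket_fillL Δ _).symm)
    exact (Provable.of_step₁ h (Step.sbStIn Γ (.bracket Δ) Sg) h').congr
      (Γ.fill_congr (.congr_right (OutCtx.bracket_fillE Δ)))
  | bStSig Γ Sg Δ =>
    have h' := (hp _ List.mem_cons_self).congr (OutCtx.bracket_fillF Γ Δ _).symm
    exact (Provable.of_step₁ h (Step.sbStOut Γ (.bracket Δ) Sg) h').congr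
      (Γ.fillF_congr ⟨.congr_right (OutCtx.bracket_fillE Δ), .refl _⟩)
  | bStDel Γ Sg Δ =>
    have h' := (hp _ List.mem_cons_self).congr (InCtx.bracket_fill Γ Δ _).symm
    exact (Provable.of_step₁ h (Step.sbStMid Γ (.bracket Δ) Sg) h').congr
      (InCtx.bracket_fill_emp Γ Δ _)

theorem admissible_bSt_of_s5bSt (h : .s5bSt ∈ R) : Admissible R .bSt := by
  intro _ _ st hp
  cases st with
  | bStIn Γ Sg Δ =>
    have h' := (hp _ List.mem_cons_self).congr (Γ.fill_congr (OutCtx.bracket_fillL Δ _).symm)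
    exact (Provable.of_step₁ h (Step.s5bStIn Γ (.bracket Δ) Sg 1 le_rfl le_rfl) h').congr
      (Γ.fill_congr (.congr_right (OutCtx.bracket_fillE Δ)))
  | bStSig Γ Sg Δ =>
    have h' := (hp _ List.mem_cons_self).congr (OutCtx.bracket_fillF Γ Δ _).symm
    exact (Provable.of_step₁ h (Step.s5bStOut Γ (.bracket Δ) Sg 1 le_rfl le_rfl) h').congr
      (Γ.fillF_congr ⟨.congr_right (OutCtx.bracket_fillE Δ), .refl _⟩)
  | bStDel Γ Sg Δ =>
    have h' := (hp _ List.mem_cons_self).congr (InCtx.bracket_fill Γ Δ _).symm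
    exact (Provable.of_step₁ h (Step.s5bStMid Γ (.bracket Δ) Sg 1 le_rfl le_rfl) h').congr
      (InCtx.bracket_fill_emp Γ Δ _)

theorem admissible_fiveSt_of_s5St (h : .s5St ∈ R) : Admissible R .fiveSt := by
  intro _ _ st hp
  cases st with
  | fiveStIn Γ Sg Δ =>
    have h' := (hp _ List.mem_cons_self).congr (Γ.fill_congr (OutCtx.bracket_fillL Δ _).symm)
    exact (Provable.of_step₁ h (Step.s5StIn Γ (.bracket Δ) Sg) h').congr
      (Γ.fill_congr (.congr_right (OutCtx.bracket_fillE Δ)))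
  | fiveStSig Γ Sg Δ =>
    have h' := (hp _ List.mem_cons_self).congr (OutCtx.bracket_fillF Γ Δ _).symm
    exact (Provable.of_step₁ h (Step.s5StOut Γ (.bracket Δ) Sg) h').congr
      (Γ.fillF_congr ⟨OutCtx.bracket_fillE Δ, .refl _⟩)
  | fiveStDel Γ Sg Δ =>
    have h' := (hp _ List.mem_cons_self).congr (InCtx.bracket_fill Γ Δ _).symm
    exact (Provable.of_step₁ h (Step.s5StMid Γ (.bracket Δ) Sg) h').congr
      (InCtx.bracket_fill_emp Γ Δ _)

theorem admissible_fiveSt_of_sb5St (h : .sb5St ∈ R) : Admissible R .fiveSt := by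
  intro _ _ st hp
  cases st with
  | fiveStIn Γ Sg Δ =>
    have h' := (hp _ List.mem_cons_self).congr (Γ.fill_congr (OutCtx.bracket_fillL Δ _).symm)
    exact (Provable.of_step₁ h (Step.sb5StIn Γ (.bracket Δ) Sg 1 le_rfl le_rfl) h').congr
      (Γ.fill_congr (.congr_right (OutCtx.bracket_fillE Δ)))
  | fiveStSig Γ Sg Δ =>
    have h' := (hp _ List.mem_cons_self).congr (OutCtx.bracket_fillF Γ Δ _).symm
    exact (Provable.of_step₁ h (Step.sb5StOut Γ (.bracket Δ) Sg 1 le_rfl le_rfl) h').congr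
      (Γ.fillF_congr ⟨OutCtx.bracket_fillE Δ, .refl _⟩)
  | fiveStDel Γ Sg Δ =>
    have h' := (hp _ List.mem_cons_self).congr (InCtx.bracket_fill Γ Δ _).symm
    exact (Provable.of_step₁ h (Step.sb5StMid Γ (.bracket Δ) Sg 1 le_rfl le_rfl) h').congr
      (InCtx.bracket_fill_emp Γ Δ _)

end OrdinaryRules

section RuleSets

variable {X Y : Set Ax} {r : RuleName}

theorem admissible_of_mem_super (hr : r ∈ NCKP ∪ lgRulesS X ∪ stRulesS Y) :
    Admissible (NCKP ∪ lgRules X ∪ stRules Y) r := by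
  have boxL_mem : RuleName.boxL ∈ NCKP ∪ lgRules X ∪ stRules Y := .inl (.inl (by simp [NCKP]))
  have diaR_mem : RuleName.diaR ∈ NCKP ∪ lgRules X ∪ stRules Y := .inl (.inl (by simp [NCKP]))
  rcases hr with (hr | ⟨hr, -⟩ | ⟨h4, rfl | rfl | rfl | rfl⟩) |
    (⟨hr, -⟩ | ⟨hb, -, rfl⟩ | ⟨h5, -, rfl⟩ | ⟨hb, h5, rfl | rfl⟩)
  · exact admissible_of_mem (.inl (.inl hr))
  · exact admissible_of_mem (.inl (.inr hr))
  · exact admissible_s4R (.inl (.inr (.inr (.inr ⟨h4, .inl rfl⟩))))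
  · exact admissible_s4L (.inl (.inr (.inr (.inr ⟨h4, .inr rfl⟩))))
  · exact admissible_s4Rdia diaR_mem (.inl (.inr (.inr (.inr ⟨h4, .inl rfl⟩))))
  · exact admissible_s4Lbox boxL_mem (.inl (.inr (.inr (.inr ⟨h4, .inr rfl⟩))))
  · exact admissible_of_mem (.inr hr)
  · exact admissible_sbSt (.inr ⟨.b, hb, rfl⟩)
  · exact admissible_s5St (.inr ⟨.five, h5, rfl⟩)
  · exact admissible_s5bSt (.inr ⟨.b, hb, rfl⟩) (.inr ⟨.five, h5, rfl⟩)
  · exact admissible_sb5St (.inr ⟨.b, hb, rfl⟩) (.inr ⟨.five, h5, rfl⟩)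

theorem admissible_of_mem_ordinary (hr : r ∈ NCKP ∪ lgRules X ∪ stRules Y) :
    Admissible (NCKP ∪ lgRulesS X ∪ stRulesS Y) r := by
  rcases hr with (hr | ⟨hd, rfl | rfl⟩ | ⟨ht, rfl | rfl⟩ | ⟨h4, rfl | rfl⟩) |
    ⟨_ | _ | _ | _ | _, hy, rfl⟩
  · exact admissible_of_mem (.inl (.inl hr))
  · exact admissible_of_mem (.inl (.inr (.inl ⟨.inl ⟨hd, .inl rfl⟩, nofun, nofun⟩)))
  · exact admissible_of_mem (.inl (.inr (.inl ⟨.inl ⟨hd, .inr rfl⟩, nofun, nofun⟩)))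
  · exact admissible_of_mem (.inl (.inr (.inl ⟨.inr (.inl ⟨ht, .inl rfl⟩), nofun, nofun⟩)))
  · exact admissible_of_mem (.inl (.inr (.inl ⟨.inr (.inl ⟨ht, .inr rfl⟩), nofun, nofun⟩)))
  · exact admissible_fourDiaR (.inl (.inr (.inr ⟨h4, .inl rfl⟩)))
  · exact admissible_fourBoxL (.inl (.inr (.inr ⟨h4, .inr (.inl rfl)⟩)))
  · exact admissible_of_mem (.inr (.inl ⟨⟨.d, hy, rfl⟩, nofun, nofun⟩))
  · exact admissible_of_mem (.inr (.inl ⟨⟨.t, hy, rfl⟩, nofun, nofun⟩))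
  · by_cases h5 : Ax.five ∈ Y
    · exact admissible_bSt_of_s5bSt (.inr (.inr (.inr (.inr ⟨hy, h5, .inl rfl⟩))))
    · exact admissible_bSt_of_sbSt (.inr (.inr (.inl ⟨hy, h5, rfl⟩)))
  · exact admissible_of_mem (.inr (.inl ⟨⟨.four, hy, rfl⟩, nofun, nofun⟩))
  · by_cases hb : Ax.b ∈ Y
    · exact admissible_fiveSt_of_sb5St (.inr (.inr (.inr (.inr ⟨hb, hy, .inr rfl⟩))))
    · exact admissible_fiveSt_of_s5St (.inr (.inr (.inr (.inl ⟨hy, hb, rfl⟩))))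

end RuleSets

theorem statement17_general (X Y : Set Ax) (Γ : FullSeq) :
    Provable (NCKP ∪ lgRulesS X ∪ stRulesS Y) Γ ↔
    Provable (NCKP ∪ lgRules X ∪ stRules Y) Γ :=
  ⟨.of_admissible fun _ => admissible_of_mem_super,
    .of_admissible fun _ => admissible_of_mem_ordinary⟩

/-- Proposition 6.5: for a safe pair ⟨X,Y⟩, a full sequent is
provable in NCK' + X^{↓}_s + Y•_s iff it is provable in NCK' + X^{↓} + Y•. -/
theorem statement17 (X Y : Set Ax) (hs : SafePair X Y) (Γ : FullSeq) :
    Provable (NCKP ∪ lgRulesS X ∪ stRulesS Y) Γ ↔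
    Provable (NCKP ∪ lgRules X ∪ stRules Y) Γ :=
  statement17_general X Y Γ
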